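/- Let A : [0,T] → M_n(ℝ) be continuous and Q₁, Q₂ : [0,T] → Sym_n(ℝ) continuous with Q₁(s) ≤ Q₂(s) for all s, and G₁ ≤ G₂ in Sym_n(ℝ) (Loewner order). If Γ₁, Γ₂ : [0,T] → Sym_n(ℝ) are C¹ and solve Γᵢ'(s) + Γᵢ(s)A(s) + A(s)ᵀΓᵢ(s) + Qᵢ(s) = 0 with Γᵢ(T) = Gᵢ, then Γ₁(s) ≤ Γ₂(s) for all s ∈ [0,T]. -/

import Mathlib

open Matrix Set

attribute [local instance] Matrix.normedAddCommGroup Matrix.normedSpace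

/-! If `y' = A y`, the quadratic form `r ↦ y(r) ⬝ D(r) y(r)` of `D = Γ₂ - Γ₁` has derivative
`y ⬝ (D' + D A + Aᵀ D) y = -(y ⬝ (Q₂ - Q₁) y) ≤ 0`, so it is antitone and `D(T) ≥ 0` gives
`x ⬝ D(s) x ≥ 0` for the solution with `y(s) = x`. Picard–Lindelöf provides such `y` only on
intervals of length of order `1 / sup ‖A‖`, so positivity is propagated backwards from `T` in steps
of that length. -/

open scoped NNReal

variable {𝕜 : Type*} [NontriviallyNormedField 𝕜] {ι : Type*} [Fintype ι]

theorem HasDerivWithinAt.dotProduct {u v : 𝕜 → ι → 𝕜} {u' v' : ι → 𝕜} {s : Set 𝕜} {x : 𝕜}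
    (hu : HasDerivWithinAt u u' s x) (hv : HasDerivWithinAt v v' s x) :
    HasDerivWithinAt (fun r => u r ⬝ᵥ v r) (u' ⬝ᵥ v x + u x ⬝ᵥ v') s x := by
  simp only [_root_.dotProduct, ← Finset.sum_add_distrib]
  exact HasDerivWithinAt.fun_sum fun i _ =>
    (hasDerivWithinAt_pi.1 hu i).mul (hasDerivWithinAt_pi.1 hv i)

theorem HasDerivWithinAt.mulVec {M : 𝕜 → Matrix ι ι 𝕜} {M' : Matrix ι ι 𝕜} {y : 𝕜 → ι → 𝕜}
    {y' : ι → 𝕜} {s : Set 𝕜} {x : 𝕜}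
    (hM : HasDerivWithinAt M M' s x) (hy : HasDerivWithinAt y y' s x) :
    HasDerivWithinAt (fun r => M r *ᵥ y r) (M' *ᵥ y x + M x *ᵥ y') s x :=
  hasDerivWithinAt_pi.2 fun i => (hasDerivWithinAt_pi.1 hM i).dotProduct hy

theorem Matrix.norm_mulVec_le_card_mul {α : Type*} [NormedRing α] {m : Type*} [Fintype m]
    (B : Matrix ι m α) (v : m → α) : ‖B *ᵥ v‖ ≤ (Fintype.card m * ‖B‖) * ‖v‖ := by
  refine (pi_norm_le_iff_of_nonneg (by positivity)).2 fun i => ?_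
  calc ‖(B *ᵥ v) i‖ ≤ ∑ j, ‖B i j * v j‖ := norm_sum_le _ _
    _ ≤ ∑ _ : m, ‖B‖ * ‖v‖ := Finset.sum_le_sum fun j _ =>
        (norm_mul_le _ _).trans (mul_le_mul (norm_entry_le_entrywise_sup_norm B)
          (norm_le_pi_norm v j) (norm_nonneg _) (norm_nonneg _))
    _ = (Fintype.card m * ‖B‖) * ‖v‖ := by simp [mul_assoc]

theorem exists_norm_mulVec_le_of_continuousOn {A : ℝ → Matrix ι ι ℝ} {a b : ℝ}
    (hA : ContinuousOn A (Icc a b)) :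
    ∃ K : ℝ≥0, ∀ r ∈ Icc a b, ∀ v : ι → ℝ, ‖A r *ᵥ v‖ ≤ K * ‖v‖ := by
  obtain ⟨M, hM⟩ := isCompact_Icc.exists_bound_of_continuousOn hA
  refine ⟨⟨Fintype.card ι * max M 0, by positivity⟩, fun r hr v => ?_⟩
  refine (norm_mulVec_le_card_mul (A r) v).trans (mul_le_mul_of_nonneg_right ?_ (norm_nonneg _))
  exact mul_le_mul_of_nonneg_left ((hM r hr).trans (le_max_left _ _)) (Nat.cast_nonneg _)

theorem exists_hasDerivWithinAt_mulVec {A : ℝ → Matrix ι ι ℝ} {K : ℝ≥0} {s t : ℝ} (hst : s ≤ t)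
    (hts : 2 * K * (t - s) ≤ 1) (hA : ContinuousOn A (Icc s t))
    (hK : ∀ r ∈ Icc s t, ∀ v : ι → ℝ, ‖A r *ᵥ v‖ ≤ K * ‖v‖) (x : ι → ℝ) :
    ∃ y : ℝ → ι → ℝ, y s = x ∧
      ∀ r ∈ Icc s t, HasDerivWithinAt y (A r *ᵥ y r) (Icc s t) r := by
  have hpl : IsPicardLindelof (fun r v => A r *ᵥ v) (⟨s, left_mem_Icc.2 hst⟩ : Icc s t) x
      ‖x‖₊ 0 (2 * K * ‖x‖₊) K := by
    refine ⟨fun r hr => ?_, fun v _ => ?_, fun r hr v hv => ?_, ?_⟩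
    · refine (LipschitzWith.of_dist_le_mul fun y z => ?_).lipschitzOnWith
      simpa only [dist_eq_norm, ← Matrix.mulVec_sub] using hK r hr (y - z)
    · exact (continuous_id.matrix_mulVec continuous_const).comp_continuousOn hA
    · have hv : ‖v‖ ≤ 2 * ‖x‖ := by
        have := mem_closedBall_iff_norm.1 hv
        have := norm_le_norm_add_norm_sub' v x
        push_cast at *; linarith
      push_cast
      calc ‖A r *ᵥ v‖ ≤ K * ‖v‖ := hK r hr v
        _ ≤ K * (2 * ‖x‖) := mul_le_mul_of_nonneg_left hv K.coe_nonneg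
        _ = 2 * K * ‖x‖ := by ring
    · push_cast
      rw [sub_self, max_eq_left (by linarith)]
      nlinarith [norm_nonneg x]
  exact hpl.exists_eq_forall_mem_Icc_hasDerivWithinAt₀

theorem forall_mem_Icc_of_backward_step {a b δ : ℝ} (hδ : 0 < δ) {P : ℝ → Prop} (hb : P b)
    (hstep : ∀ s ∈ Icc a b, ∀ t ∈ Icc a b, s ≤ t → t ≤ s + δ → P t → P s) :
    ∀ s ∈ Icc a b, P s := by
  suffices h : ∀ k : ℕ, ∀ s ∈ Icc a b, b - s ≤ k * δ → P s by
    intro s hs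
    obtain ⟨k, hk⟩ := exists_nat_ge ((b - s) / δ)
    exact h k s hs ((div_le_iff₀ hδ).1 hk)
  intro k
  induction k with
  | zero =>
    intro s hs hsb
    rwa [show s = b by simp at hsb; linarith [hs.2]]
  | succ k ih =>
    intro s hs hsb
    by_cases hk : b - s ≤ k * δ
    · exact ih s hs hk
    have hst : s ≤ min b (s + δ) := le_min hs.2 (by linarith)
    have ht : min b (s + δ) ∈ Icc a b := ⟨hs.1.trans hst, min_le_left _ _⟩
    refine hstep s hs _ ht hst (min_le_right _ _) (ih _ ht ?_)
    push_cast at hsb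
    rcases min_choice b (s + δ) with h | h <;> rw [h] <;> nlinarith

section Lyapunov

variable {A D D' : ℝ → Matrix ι ι ℝ}

theorem posSemidef_of_lyapunov_of_sub_le {K : ℝ≥0} {s t : ℝ} (hst : s ≤ t)
    (hts : 2 * K * (t - s) ≤ 1) (hA : ContinuousOn A (Icc s t))
    (hK : ∀ r ∈ Icc s t, ∀ v : ι → ℝ, ‖A r *ᵥ v‖ ≤ K * ‖v‖)
    (hD : ∀ r ∈ Icc s t, HasDerivWithinAt D (D' r) (Icc s t) r)
    (hL : ∀ r ∈ Icc s t, (-(D' r + D r * A r + (A r)ᵀ * D r)).PosSemidef)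
    (hs : (D s).IsHermitian) (ht : (D t).PosSemidef) : (D s).PosSemidef := by
  refine .of_dotProduct_mulVec_nonneg hs fun x => ?_
  obtain ⟨y, rfl, hy⟩ := exists_hasDerivWithinAt_mulVec hst hts hA hK x
  have hg : ∀ r ∈ Icc s t, HasDerivWithinAt (fun r => y r ⬝ᵥ (D r *ᵥ y r))
      (y r ⬝ᵥ ((D' r + D r * A r + (A r)ᵀ * D r) *ᵥ y r)) (Icc s t) r := by
    intro r hr
    refine ((hy r hr).dotProduct ((hD r hr).mulVec (hy r hr))).congr_deriv ?_
    simp only [add_mulVec, ← mulVec_mulVec, dotProduct_add, dotProduct_mulVec _ (A r)ᵀ,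
      vecMul_transpose, dotProduct_comm (A r *ᵥ y r)]
    ring
  have hanti : AntitoneOn (fun r => y r ⬝ᵥ (D r *ᵥ y r)) (Icc s t) := by
    refine antitoneOn_of_hasDerivWithinAt_nonpos (convex_Icc s t)
      (fun r hr => (hg r hr).continuousWithinAt)
      (fun r hr => (hg r (interior_subset hr)).mono interior_subset) fun r hr => ?_
    have := (hL r (interior_subset hr)).dotProduct_mulVec_nonneg (y r)
    rwa [star_trivial, neg_mulVec, dotProduct_neg, neg_nonneg] at this
  simpa using (ht.dotProduct_mulVec_nonneg (y t)).trans
    (hanti (left_mem_Icc.2 hst) (right_mem_Icc.2 hst) hst)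

theorem posSemidef_of_lyapunov {a b : ℝ} (hA : ContinuousOn A (Icc a b))
    (hD : ∀ r ∈ Icc a b, HasDerivWithinAt D (D' r) (Icc a b) r)
    (hL : ∀ r ∈ Icc a b, (-(D' r + D r * A r + (A r)ᵀ * D r)).PosSemidef)
    (hherm : ∀ s ∈ Icc a b, (D s).IsHermitian) (hb : (D b).PosSemidef) :
    ∀ s ∈ Icc a b, (D s).PosSemidef := by
  obtain ⟨K, hK⟩ := exists_norm_mulVec_le_of_continuousOn hA
  refine forall_mem_Icc_of_backward_step (δ := 1 / (2 * K + 1)) (by positivity) hb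
    fun s hs t ht hst htδ hDt => ?_
  have hsub : Icc s t ⊆ Icc a b := Icc_subset_Icc hs.1 ht.2
  refine posSemidef_of_lyapunov_of_sub_le hst ?_ (hA.mono hsub) (fun r hr => hK r (hsub hr))
    (fun r hr => (hD r (hsub hr)).mono hsub) (fun r hr => hL r (hsub hr)) (hherm s hs) hDt
  calc 2 * (K : ℝ) * (t - s) ≤ 2 * K * (1 / (2 * K + 1)) := by gcongr; linarith
    _ ≤ 1 := by rw [mul_one_div, div_le_one (by positivity)]; linarith

end Lyapunov

theorem stmt3_general {n : ℕ} (T : ℝ)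
    (A : ℝ → Matrix (Fin n) (Fin n) ℝ)
    (Q₁ Q₂ : ℝ → Matrix (Fin n) (Fin n) ℝ)
    (G₁ G₂ : Matrix (Fin n) (Fin n) ℝ)
    (hA : ContinuousOn A (Icc 0 T))
    (hQle : ∀ s ∈ Icc 0 T, (Q₂ s - Q₁ s).PosSemidef)
    (hGle : (G₂ - G₁).PosSemidef)
    (Γ₁ Γ₁' Γ₂ Γ₂' : ℝ → Matrix (Fin n) (Fin n) ℝ)
    (hΓ₁sym : ∀ s ∈ Icc 0 T, (Γ₁ s).IsHermitian)
    (hΓ₂sym : ∀ s ∈ Icc 0 T, (Γ₂ s).IsHermitian)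
    (hd₁ : ∀ s ∈ Icc 0 T, HasDerivAt Γ₁ (Γ₁' s) s)
    (hd₂ : ∀ s ∈ Icc 0 T, HasDerivAt Γ₂ (Γ₂' s) s)
    (hode₁ : ∀ s ∈ Icc 0 T, Γ₁' s + Γ₁ s * A s + (A s)ᵀ * Γ₁ s + Q₁ s = 0)
    (hode₂ : ∀ s ∈ Icc 0 T, Γ₂' s + Γ₂ s * A s + (A s)ᵀ * Γ₂ s + Q₂ s = 0)
    (hterm₁ : Γ₁ T = G₁) (hterm₂ : Γ₂ T = G₂) :
    ∀ s ∈ Icc 0 T, (Γ₂ s - Γ₁ s).PosSemidef := by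
  have hL : ∀ r ∈ Icc 0 T, -((Γ₂' r - Γ₁' r) + (Γ₂ r - Γ₁ r) * A r + (A r)ᵀ * (Γ₂ r - Γ₁ r))
      = Q₂ r - Q₁ r := fun r hr => by
    rw [sub_mul, mul_sub]
    linear_combination (norm := abel) hode₁ r hr - hode₂ r hr
  refine posSemidef_of_lyapunov (D := fun r => Γ₂ r - Γ₁ r) hA
    (fun r hr => ((hd₂ r hr).sub (hd₁ r hr)).hasDerivWithinAt) (fun r hr => hL r hr ▸ hQle r hr)
    (fun s hs => (hΓ₂sym s hs).sub (hΓ₁sym s hs)) (by rwa [hterm₁, hterm₂])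

theorem stmt3 {n : ℕ} (T : ℝ) (hT : 0 < T)
    (A : ℝ → Matrix (Fin n) (Fin n) ℝ)
    (Q₁ Q₂ : ℝ → Matrix (Fin n) (Fin n) ℝ)
    (G₁ G₂ : Matrix (Fin n) (Fin n) ℝ)
    (hA : ContinuousOn A (Icc 0 T))
    (hQ₁ : ContinuousOn Q₁ (Icc 0 T)) (hQ₂ : ContinuousOn Q₂ (Icc 0 T))
    (hQ₁sym : ∀ s ∈ Icc 0 T, (Q₁ s).IsHermitian)
    (hQ₂sym : ∀ s ∈ Icc 0 T, (Q₂ s).IsHermitian)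
    (hQle : ∀ s ∈ Icc 0 T, (Q₂ s - Q₁ s).PosSemidef)
    (hG₁ : G₁.IsHermitian) (hG₂ : G₂.IsHermitian) (hGle : (G₂ - G₁).PosSemidef)
    (Γ₁ Γ₁' Γ₂ Γ₂' : ℝ → Matrix (Fin n) (Fin n) ℝ)
    (hΓ₁sym : ∀ s ∈ Icc 0 T, (Γ₁ s).IsHermitian)
    (hΓ₂sym : ∀ s ∈ Icc 0 T, (Γ₂ s).IsHermitian)
    (hd₁ : ∀ s ∈ Icc 0 T, HasDerivAt Γ₁ (Γ₁' s) s)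
    (hd₂ : ∀ s ∈ Icc 0 T, HasDerivAt Γ₂ (Γ₂' s) s)
    (hΓ₁'cont : ContinuousOn Γ₁' (Icc 0 T)) (hΓ₂'cont : ContinuousOn Γ₂' (Icc 0 T))
    (hode₁ : ∀ s ∈ Icc 0 T, Γ₁' s + Γ₁ s * A s + (A s)ᵀ * Γ₁ s + Q₁ s = 0)
    (hode₂ : ∀ s ∈ Icc 0 T, Γ₂' s + Γ₂ s * A s + (A s)ᵀ * Γ₂ s + Q₂ s = 0)
    (hterm₁ : Γ₁ T = G₁) (hterm₂ : Γ₂ T = G₂) :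
    ∀ s ∈ Icc 0 T, (Γ₂ s - Γ₁ s).PosSemidef :=
  stmt3_general T A Q₁ Q₂ G₁ G₂ hA hQle hGle Γ₁ Γ₁' Γ₂ Γ₂' hΓ₁sym hΓ₂sym hd₁ hd₂ hode₁ hode₂ hterm₁
    hterm₂
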